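/- There is an isomorphism of groups φ : G2 → G1 with φ(s) = ab and φ(t) = aba, whose inverse sends a to s⁻¹t and b to t⁻¹s². -/

import Mathlib

/-- `SL(2,ℤ)`: 2×2 integer matrices of determinant 1. -/
abbrev SL2Z := Matrix.SpecialLinearGroup (Fin 2) ℤ

/-- The matrix `A = !![1,1; 0,1]` as an element of `SL(2,ℤ)`. -/
def MA : SL2Z := ⟨!![1, 1; 0, 1], by norm_num [Matrix.det_fin_two_of]⟩

/-- The matrix `B = !![1,0; -1,1]` as an element of `SL(2,ℤ)`. -/
def MB : SL2Z := ⟨!![1, 0; -1, 1], by norm_num [Matrix.det_fin_two_of]⟩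

/-- Relations for the presented group `G1 = ⟨a, b | aba = bab, (aba)⁴ = 1⟩`,
with `a` corresponding to `0` and `b` to `1`. -/
def g1Rels : Set (FreeGroup (Fin 2)) :=
  { FreeGroup.of 0 * FreeGroup.of 1 * FreeGroup.of 0 *
      (FreeGroup.of 1 * FreeGroup.of 0 * FreeGroup.of 1)⁻¹,
    (FreeGroup.of 0 * FreeGroup.of 1 * FreeGroup.of 0) ^ 4 }

/-- The presented group `G1 = ⟨a, b | aba = bab, (aba)⁴ = 1⟩`. -/
abbrev G1 := PresentedGroup g1Rels

/-- The generator `a` of `G1`. -/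
def ga : G1 := PresentedGroup.of 0

/-- The generator `b` of `G1`. -/
def gb : G1 := PresentedGroup.of 1

/-- Relations for the presented group `G2 = ⟨s, t | s³ = t², t⁴ = 1⟩`,
with `s` corresponding to `0` and `t` to `1`. -/
def g2Rels : Set (FreeGroup (Fin 2)) :=
  { FreeGroup.of 0 ^ 3 * (FreeGroup.of 1 ^ 2)⁻¹, FreeGroup.of 1 ^ 4 }

/-- The presented group `G2 = ⟨s, t | s³ = t², t⁴ = 1⟩`. -/
abbrev G2 := PresentedGroup g2Rels

/-- The generator `s` of `G2`. -/
def g2s : G2 := PresentedGroup.of 0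

/-- The generator `t` of `G2`. -/
def g2t : G2 := PresentedGroup.of 1

/-!
The substitution `s = ab`, `t = aba` is inverted by `a = s⁻¹t`, `b = t⁻¹s²` in any group, and it
carries the braid relation to `s³ = t²`, because `(ab)³ = aba · bab` while `(aba)² = aba · aba`.
It also carries `(aba)⁴ = 1` to `t⁴ = 1`, so the two presentations define the same group.
-/

section ChangeOfGenerators

variable {G : Type*} [Group G]

theorem braid_iff_mul_pow_three_eq_sq {a b : G} :
    a * b * a = b * a * b ↔ (a * b) ^ 3 = (a * b * a) ^ 2 := by
  have h : (a * b) ^ 3 = a * b * a * (b * a * b) := by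
    simp only [pow_succ, pow_zero, one_mul, mul_assoc]
  rw [h, sq, mul_right_inj, eq_comm]

theorem mul_inv_mul_mul_mul (a b : G) : (a * b)⁻¹ * (a * b * a) = a := by group

theorem mul_mul_inv_mul_mul_sq (a b : G) : (a * b * a)⁻¹ * (a * b) ^ 2 = b := by
  rw [sq]
  group

theorem inv_mul_mul_inv_mul_sq (s t : G) : s⁻¹ * t * (t⁻¹ * s ^ 2) = s := by group

theorem inv_mul_mul_inv_mul_sq_mul_inv_mul (s t : G) :
    s⁻¹ * t * (t⁻¹ * s ^ 2) * (s⁻¹ * t) = t := by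
  group

end ChangeOfGenerators

theorem ga_mul_gb_mul_ga : ga * gb * ga = gb * ga * gb :=
  PresentedGroup.mk_eq_mk_of_mul_inv_mem (Or.inl rfl)

theorem ga_mul_gb_mul_ga_pow_four : (ga * gb * ga) ^ 4 = 1 :=
  PresentedGroup.one_of_mem (Or.inr rfl)

theorem g2s_pow_three : g2s ^ 3 = g2t ^ 2 :=
  PresentedGroup.mk_eq_mk_of_mul_inv_mem (Or.inl rfl)

theorem g2t_pow_four : g2t ^ 4 = 1 :=
  PresentedGroup.one_of_mem (Or.inr rfl)

def g2ToG1 : G2 →* G1 :=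
  PresentedGroup.toGroup (f := ![ga * gb, ga * gb * ga]) <| by
    rintro r (rfl | rfl) <;>
      simp only [map_mul, map_inv, map_pow, FreeGroup.lift_apply_of, Matrix.cons_val_zero,
        Matrix.cons_val_one]
    · exact mul_inv_eq_one.mpr (braid_iff_mul_pow_three_eq_sq.mp ga_mul_gb_mul_ga)
    · exact ga_mul_gb_mul_ga_pow_four

def g1ToG2 : G1 →* G2 :=
  PresentedGroup.toGroup (f := ![g2s⁻¹ * g2t, g2t⁻¹ * g2s ^ 2]) <| by
    rintro r (rfl | rfl) <;>
      simp only [map_mul, map_inv, map_pow, FreeGroup.lift_apply_of, Matrix.cons_val_zero,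
        Matrix.cons_val_one]
    · refine mul_inv_eq_one.mpr (braid_iff_mul_pow_three_eq_sq.mpr ?_)
      rw [inv_mul_mul_inv_mul_sq_mul_inv_mul, inv_mul_mul_inv_mul_sq, g2s_pow_three]
    · rw [inv_mul_mul_inv_mul_sq_mul_inv_mul, g2t_pow_four]

@[simp] theorem g2ToG1_g2s : g2ToG1 g2s = ga * gb := PresentedGroup.toGroup.of _

@[simp] theorem g2ToG1_g2t : g2ToG1 g2t = ga * gb * ga := PresentedGroup.toGroup.of _

@[simp] theorem g1ToG2_ga : g1ToG2 ga = g2s⁻¹ * g2t := PresentedGroup.toGroup.of _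

@[simp] theorem g1ToG2_gb : g1ToG2 gb = g2t⁻¹ * g2s ^ 2 := PresentedGroup.toGroup.of _

theorem g1ToG2_comp_g2ToG1 : g1ToG2.comp g2ToG1 = MonoidHom.id G2 := by
  refine PresentedGroup.ext fun i => ?_
  fin_cases i
  · show g1ToG2 (g2ToG1 g2s) = g2s
    rw [g2ToG1_g2s, map_mul, g1ToG2_ga, g1ToG2_gb, inv_mul_mul_inv_mul_sq]
  · show g1ToG2 (g2ToG1 g2t) = g2t
    rw [g2ToG1_g2t, map_mul, map_mul, g1ToG2_ga, g1ToG2_gb, inv_mul_mul_inv_mul_sq_mul_inv_mul]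

theorem g2ToG1_comp_g1ToG2 : g2ToG1.comp g1ToG2 = MonoidHom.id G1 := by
  refine PresentedGroup.ext fun i => ?_
  fin_cases i
  · show g2ToG1 (g1ToG2 ga) = ga
    rw [g1ToG2_ga, map_mul, map_inv, g2ToG1_g2s, g2ToG1_g2t, mul_inv_mul_mul_mul]
  · show g2ToG1 (g1ToG2 gb) = gb
    rw [g1ToG2_gb, map_mul, map_inv, map_pow, g2ToG1_g2s, g2ToG1_g2t, mul_mul_inv_mul_mul_sq]

theorem stmt3 :
    ∃ φ : G2 ≃* G1,
      φ g2s = ga * gb ∧ φ g2t = ga * gb * ga ∧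
      φ.symm ga = g2s⁻¹ * g2t ∧ φ.symm gb = g2t⁻¹ * g2s ^ 2 :=
  ⟨g2ToG1.toMulEquiv g1ToG2 g1ToG2_comp_g2ToG1 g2ToG1_comp_g1ToG2,
    g2ToG1_g2s, g2ToG1_g2t, g1ToG2_ga, g1ToG2_gb⟩
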